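/- Define the canonical higher Serre derivatives ∂_k^{[n]} on holomorphic functions on ℍ by ∂_k^{[0]} f = f, ∂_k^{[1]} f = D f - (k/12)E₂ f, and ∂_k^{[n+1]} f = ∂_{k+2n}(∂_k^{[n]} f) - (n(n+k-1)/144)·E₄·∂_k^{[n-1]} f for n ≥ 1. Then for any holomorphic f and all k, n ≥ 0: ∂_k^{[n]}(f) = Σ_{r=0}^n C(n,r)·(k+r)_{n-r}·(-E₂/12)^{n-r}·D^r(f). -/

import Mathlib

/-!
With `G = -E₂/12` and `W = E₄/144`, Ramanujan's identity reads `D G = W - G²`. Differentiate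
the closed form `Σ c(n+1,r) G^(n+1-r) D^r f` term by term and insert it into the recurrence:
the `W`-terms cancel against the `E₄`-term since `(n+1-r) c(n+1,r) = (n+1)(n+k) c(n,r)`, and
the remaining terms recombine into the closed form for `n+2` by the Pascal-type rule
`c(m+1,r+1) = c(m,r) + (k+m+1+r) c(m,r+1)`, where `c(n,r) = C(n,r) (k+r)_(n-r)`.
-/

open Complex Finset

noncomputable section

/-- The normalized derivative `D = (2πi)⁻¹ d/dτ`. -/
def Dop (f : ℂ → ℂ) : ℂ → ℂ := fun τ => (2 * ↑Real.pi * I)⁻¹ * deriv f τ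

/-- Rising factorial `x (x+1) ⋯ (x+n-1)` for complex `x`. -/
def risingC (x : ℂ) (n : ℕ) : ℂ := ∏ i ∈ Finset.range n, (x + i)

/-- The canonical higher Serre derivatives: `∂_k^{[0]} f = f`, `∂_k^{[1]} f = Df - (k/12)E₂f`,
`∂_k^{[n+1]} f = ∂_{k+2n}(∂_k^{[n]} f) - (n(n+k-1)/144)·E₄·∂_k^{[n-1]} f`. -/
def higherSerre (E2 E4 : ℂ → ℂ) (k : ℂ) (f : ℂ → ℂ) : ℕ → ℂ → ℂ
  | 0 => f
  | 1 => fun τ => Dop f τ - k / 12 * E2 τ * f τ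
  | (n + 2) => fun τ =>
      (Dop (higherSerre E2 E4 k f (n + 1)) τ -
          (k + 2 * ((n : ℂ) + 1)) / 12 * E2 τ * higherSerre E2 E4 k f (n + 1) τ) -
        (((n : ℂ) + 1) * (((n : ℂ) + 1) + k - 1) / 144) * E4 τ *
          higherSerre E2 E4 k f n τ

def serreCoeff (k : ℂ) (n r : ℕ) : ℂ := n.choose r * risingC (k + r) (n - r)

/-- The closed form, with `G` standing for `-E₂/12` and `F r` for `D^r f`. -/
def serrePoly (k G : ℂ) (F : ℕ → ℂ) (n : ℕ) : ℂ :=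
  ∑ r ∈ range (n + 1), serreCoeff k n r * G ^ (n - r) * F r

lemma risingC_zero (x : ℂ) : risingC x 0 = 1 := prod_range_zero _

lemma risingC_succ (x : ℂ) (n : ℕ) : risingC x (n + 1) = risingC x n * (x + n) :=
  prod_range_succ _ _

lemma risingC_succ' (x : ℂ) (n : ℕ) : risingC x (n + 1) = x * risingC (x + 1) n := by
  simp only [risingC, prod_range_succ', Nat.cast_add, Nat.cast_one, Nat.cast_zero, add_zero]
  rw [mul_comm]
  congr 1
  exact prod_congr rfl fun i _ => by ring

section serreCoeff

variable (k : ℂ)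

lemma serreCoeff_of_lt {n r : ℕ} (h : n < r) : serreCoeff k n r = 0 := by
  simp [serreCoeff, Nat.choose_eq_zero_of_lt h]

lemma serreCoeff_succ_zero (m : ℕ) : serreCoeff k (m + 1) 0 = (k + m) * serreCoeff k m 0 := by
  simp [serreCoeff, risingC_succ, mul_comm]

lemma natCast_sub_mul_serreCoeff_succ (n r : ℕ) :
    ((n + 1 - r : ℕ) : ℂ) * serreCoeff k (n + 1) r = (n + 1) * (k + n) * serreCoeff k n r := by
  rcases lt_or_ge n r with h | h
  · simp [serreCoeff_of_lt k h, show n + 1 - r = 0 by omega]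
  obtain ⟨j, rfl⟩ := Nat.exists_eq_add_of_le h
  have hchoose : ((r + j).choose r * (r + j + 1) : ℂ) = (r + j + 1).choose r * (j + 1) := by
    exact_mod_cast (Nat.choose_mul_succ_eq (r + j) r).trans
      (by rw [show r + j + 1 - r = j + 1 by omega])
  simp only [serreCoeff, show r + j + 1 - r = j + 1 by omega, show r + j - r = j by omega,
    risingC_succ]
  push_cast
  linear_combination (-(k + r + j) * risingC (k + r) j) * hchoose

lemma serreCoeff_succ_succ (m r : ℕ) :
    serreCoeff k (m + 1) (r + 1) = serreCoeff k m r + (k + m + 1 + r) * serreCoeff k m (r + 1) := by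
  rcases le_or_gt m r with h | h
  · rcases h.eq_or_lt with rfl | h
    · simp [serreCoeff, risingC_zero]
    · simp [serreCoeff_of_lt k h, serreCoeff_of_lt k (Nat.lt_succ_of_lt h),
        serreCoeff_of_lt k (Nat.succ_lt_succ h)]
  obtain ⟨j, rfl⟩ := Nat.exists_eq_add_of_lt h
  have hpascal : ((r + j + 1 + 1).choose (r + 1) : ℂ) =
      (r + j + 1).choose r + (r + j + 1).choose (r + 1) := by
    exact_mod_cast Nat.choose_succ_succ' _ _
  have hratio : ((r + j + 1).choose (r + 1) : ℂ) * (r + 1) = (r + j + 1).choose r * (j + 1) := by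
    exact_mod_cast (Nat.choose_succ_right_eq _ _).trans
      (by rw [show r + j + 1 - r = j + 1 by omega])
  simp only [serreCoeff, show r + j + 1 + 1 - (r + 1) = j + 1 by omega,
    show r + j + 1 - r = j + 1 by omega, show r + j + 1 - (r + 1) = j by omega]
  rw [risingC_succ, risingC_succ' (k + r)]
  push_cast at hpascal hratio ⊢
  rw [← add_assoc k]
  linear_combination (k + r + 1 + j) * risingC (k + r + 1) j * hpascal -
    risingC (k + r + 1) j * hratio

end serreCoeff

lemma natCast_mul_pow_sub_one_mul_sq (G : ℂ) (m : ℕ) :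
    (m : ℂ) * G ^ (m - 1) * G ^ 2 = m * G ^ (m + 1) := by
  rcases m with _ | m
  · simp
  · rw [Nat.add_sub_cancel]; ring

section serrePoly

variable (k G : ℂ) (F : ℕ → ℂ)

lemma sum_natCast_sub_mul_serreCoeff_succ (n : ℕ) :
    ∑ r ∈ range (n + 2),
        serreCoeff k (n + 1) r * ((n + 1 - r : ℕ) * G ^ (n + 1 - r - 1) * F r) =
      (n + 1) * (k + n) * serrePoly k G F n := by
  rw [sum_range_succ, Nat.sub_self, Nat.cast_zero, zero_mul, zero_mul, mul_zero, add_zero,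
    serrePoly, mul_sum]
  refine sum_congr rfl fun r _ => ?_
  rw [show n + 1 - r - 1 = n - r by omega]
  linear_combination (G ^ (n - r) * F r) * natCast_sub_mul_serreCoeff_succ k n r

lemma serrePoly_succ (m : ℕ) :
    serrePoly k G F (m + 1) =
      ∑ r ∈ range (m + 1), serreCoeff k m r * G ^ (m - r) * F (r + 1) +
        ∑ r ∈ range (m + 1), (k + m + r) * serreCoeff k m r * G ^ (m + 1 - r) * F r := by
  set shifted : ℕ → ℂ := fun r =>
    (k + m + (r + 1 : ℕ)) * serreCoeff k m (r + 1) * G ^ (m + 1 - (r + 1)) * F (r + 1)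
  have hextend : ∑ r ∈ range m, shifted r = ∑ r ∈ range (m + 1), shifted r := by
    simp [shifted, sum_range_succ, serreCoeff_of_lt k (Nat.lt_succ_self m)]
  rw [serrePoly, sum_range_succ',
    sum_range_succ' (fun r => (k + m + r) * serreCoeff k m r * G ^ (m + 1 - r) * F r), hextend,
    add_left_comm, ← add_assoc, ← sum_add_distrib]
  congr 1
  · refine sum_congr rfl fun r _ => ?_
    simp only [shifted, serreCoeff_succ_succ, Nat.add_sub_add_right]
    push_cast
    ring
  · rw [serreCoeff_succ_zero]
    push_cast
    ring

end serrePoly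

lemma serrePoly_succ_succ (k G W : ℂ) (F : ℕ → ℂ) (n : ℕ) :
    ∑ r ∈ range (n + 2), serreCoeff k (n + 1) r *
        ((n + 1 - r : ℕ) * G ^ (n + 1 - r - 1) * (W - G ^ 2) * F r +
          G ^ (n + 1 - r) * F (r + 1)) +
      (k + 2 * (n + 1)) * G * serrePoly k G F (n + 1) -
      (n + 1) * (n + k) * W * serrePoly k G F n =
      serrePoly k G F (n + 2) := by
  have hterm : ∀ r ∈ range (n + 2),
      serreCoeff k (n + 1) r *
          ((n + 1 - r : ℕ) * G ^ (n + 1 - r - 1) * (W - G ^ 2) * F r +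
            G ^ (n + 1 - r) * F (r + 1)) +
        (k + 2 * (n + 1)) * G * (serreCoeff k (n + 1) r * G ^ (n + 1 - r) * F r) =
      W * (serreCoeff k (n + 1) r * ((n + 1 - r : ℕ) * G ^ (n + 1 - r - 1) * F r)) +
        (serreCoeff k (n + 1) r * G ^ (n + 1 - r) * F (r + 1) +
          (k + (n + 1 : ℕ) + r) * serreCoeff k (n + 1) r * G ^ (n + 1 + 1 - r) * F r) := by
    intro r hr
    have hr : r ≤ n + 1 := Nat.lt_succ_iff.mp (mem_range.mp hr)
    have hsq := natCast_mul_pow_sub_one_mul_sq G (n + 1 - r)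
    rw [show n + 1 + 1 - r = n + 1 - r + 1 by omega, Nat.cast_sub hr]
    rw [Nat.cast_sub hr] at hsq
    push_cast at hsq ⊢
    linear_combination (-(serreCoeff k (n + 1) r * F r)) * hsq
  rw [serrePoly_succ k G F (n + 1), serrePoly.eq_1 k G F (n + 1), mul_sum, ← sum_add_distrib,
    sum_congr rfl hterm, sum_add_distrib, sum_add_distrib, ← mul_sum,
    sum_natCast_sub_mul_serreCoeff_succ]
  ring

section Dop

variable {s : Set ℂ} {g g₁ g₂ : ℂ → ℂ} {τ : ℂ}

lemma Dop_congr_of_eqOn (hs : IsOpen s) (h : Set.EqOn g₁ g₂ s) (hτ : τ ∈ s) :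
    Dop g₁ τ = Dop g₂ τ := by
  rw [Dop, Dop, (h.eventuallyEq_of_mem (hs.mem_nhds hτ)).deriv_eq]

lemma differentiableOn_Dop (hs : IsOpen s) (hg : DifferentiableOn ℂ g s) :
    DifferentiableOn ℂ (Dop g) s :=
  (hg.analyticOnNhd hs).deriv.differentiableOn.const_mul _

lemma differentiableOn_iterate_Dop (hs : IsOpen s) (hg : DifferentiableOn ℂ g s) (r : ℕ) :
    DifferentiableOn ℂ (Dop^[r] g) s := by
  induction r with
  | zero => exact hg
  | succ r ih => rw [Function.iterate_succ_apply']; exact differentiableOn_Dop hs ih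

lemma Dop_neg_div_const (c : ℂ) : Dop (fun x => -g x / c) τ = -Dop g τ / c := by
  simp only [Dop, deriv_div_const, deriv.fun_neg]
  ring

lemma Dop_sum_mul_pow_mul {t : Finset ℕ} (a : ℕ → ℂ) (e : ℕ → ℕ)
    {F : ℕ → ℂ → ℂ} (hg : DifferentiableAt ℂ g τ)
    (hF : ∀ r ∈ t, DifferentiableAt ℂ (F r) τ) :
    Dop (fun x => ∑ r ∈ t, a r * g x ^ e r * F r x) τ =
      ∑ r ∈ t, a r *
        ((e r : ℂ) * g τ ^ (e r - 1) * Dop g τ * F r τ + g τ ^ e r * Dop (F r) τ) := by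
  have hpow (r : ℕ) : DifferentiableAt ℂ (fun x => a r * g x ^ e r) τ :=
    (hg.fun_pow _).const_mul _
  rw [Dop, deriv_fun_sum fun r hr => (hpow r).fun_mul (hF r hr), mul_sum]
  refine sum_congr rfl fun r hr => ?_
  rw [deriv_fun_mul (hpow r) (hF r hr), deriv_const_mul _ (hg.fun_pow _), deriv_fun_pow hg,
    Dop, Dop]
  ring

end Dop

theorem higherSerre_eqOn_serrePoly {E2 E4 f : ℂ → ℂ} {s : Set ℂ} (hs : IsOpen s)
    (hE2 : DifferentiableOn ℂ E2 s) (hf : DifferentiableOn ℂ f s)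
    (hram : ∀ τ ∈ s, Dop E2 τ = (E2 τ ^ 2 - E4 τ) / 12) (k : ℂ) :
    ∀ n, Set.EqOn (higherSerre E2 E4 k f n)
      (fun τ => serrePoly k (-E2 τ / 12) (fun r => Dop^[r] f τ) n) s
  | 0 => fun τ _ => by simp [higherSerre, serrePoly, serreCoeff, risingC_zero]
  | 1 => fun τ _ => by
      simp only [higherSerre, serrePoly, serreCoeff, sum_range_succ, range_one, sum_singleton,
        Nat.choose_succ_self_right, Nat.choose_self, Nat.cast_one, CharP.cast_eq_zero, tsub_zero,
        tsub_self, risingC_succ, risingC_zero, Function.iterate_zero, Function.iterate_one, id_eq]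
      ring
  | n + 2 => fun τ hτ => by
      have hG : Dop (fun x => -E2 x / 12) τ = E4 τ / 144 - (-E2 τ / 12) ^ 2 := by
        rw [Dop_neg_div_const, hram τ hτ]
        ring
      have hDop : Dop (higherSerre E2 E4 k f (n + 1)) τ =
          ∑ r ∈ range (n + 2), serreCoeff k (n + 1) r *
            ((n + 1 - r : ℕ) * (-E2 τ / 12) ^ (n + 1 - r - 1) *
                (E4 τ / 144 - (-E2 τ / 12) ^ 2) * Dop^[r] f τ +
              (-E2 τ / 12) ^ (n + 1 - r) * Dop^[r + 1] f τ) := by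
        rw [Dop_congr_of_eqOn hs (higherSerre_eqOn_serrePoly hs hE2 hf hram k (n + 1)) hτ]
        simp only [serrePoly]
        have hnhds := hs.mem_nhds hτ
        rw [Dop_sum_mul_pow_mul _ _ ((hE2.differentiableAt hnhds).fun_neg.div_const 12)
          fun r _ => (differentiableOn_iterate_Dop hs hf r).differentiableAt hnhds, hG]
        simp only [Function.iterate_succ_apply']
      simp only [higherSerre]
      rw [hDop, higherSerre_eqOn_serrePoly hs hE2 hf hram k (n + 1) hτ,
        higherSerre_eqOn_serrePoly hs hE2 hf hram k n hτ]
      linear_combination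
        serrePoly_succ_succ k (-E2 τ / 12) (E4 τ / 144) (fun r => Dop^[r] f τ) n

theorem statement16_general (E2 E4 f : ℂ → ℂ)
    (hE2 : DifferentiableOn ℂ E2 {z : ℂ | 0 < z.im})
    (hf : DifferentiableOn ℂ f {z : ℂ | 0 < z.im})
    (hram : ∀ τ : ℂ, 0 < τ.im → Dop E2 τ = (E2 τ ^ 2 - E4 τ) / 12)
    (k n : ℕ) (τ : ℂ) (hτ : 0 < τ.im) :
    higherSerre E2 E4 (k : ℂ) f n τ =
      ∑ r ∈ Finset.range (n + 1),
        (n.choose r : ℂ) * risingC ((k : ℂ) + (r : ℂ)) (n - r) *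
          (-(E2 τ) / 12) ^ (n - r) * Dop^[r] f τ :=
  higherSerre_eqOn_serrePoly (isOpen_lt continuous_const continuous_im) hE2 hf hram k n hτ

/-- For any holomorphic `f` on `ℍ` and all `k, n ≥ 0`:
`∂_k^{[n]}(f) = Σ_{r=0}^n C(n,r)·(k+r)_{n-r}·(-E₂/12)^{n-r}·D^r(f)`, where `E₂, E₄` satisfy
Ramanujan's identity `D(E₂) = (E₂² - E₄)/12` on `ℍ`. -/
theorem statement16 (E2 E4 f : ℂ → ℂ)
    (hE2 : DifferentiableOn ℂ E2 {z : ℂ | 0 < z.im})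
    (hE4 : DifferentiableOn ℂ E4 {z : ℂ | 0 < z.im})
    (hf : DifferentiableOn ℂ f {z : ℂ | 0 < z.im})
    (hram : ∀ τ : ℂ, 0 < τ.im → Dop E2 τ = (E2 τ ^ 2 - E4 τ) / 12)
    (k n : ℕ) (τ : ℂ) (hτ : 0 < τ.im) :
    higherSerre E2 E4 (k : ℂ) f n τ =
      ∑ r ∈ Finset.range (n + 1),
        (n.choose r : ℂ) * risingC ((k : ℂ) + (r : ℂ)) (n - r) *
          (-(E2 τ) / 12) ^ (n - r) * Dop^[r] f τ :=
  statement16_general E2 E4 f hE2 hf hram k n τ hτ
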